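/- Suppose that for every positive integer n, n·1_R is not a zero divisor in R, and let c ∈ R. If p ∈ R[X_1,…,X_N] is harmonic (Δp = 0) and p is a multiple of X·X − c (i.e., p = (X·X − c)·q for some q ∈ R[X_1,…,X_N]), then p = 0. -/

import Mathlib

open MvPolynomial

/-- The rotation generator `M_{jk} p = X_j ∂_k p − X_k ∂_j p`. -/
noncomputable def rot {R : Type*} [CommRing R] {N : ℕ} (j k : Fin N)
    (p : MvPolynomial (Fin N) R) : MvPolynomial (Fin N) R :=
  X j * pderiv k p - X k * pderiv j p

/-- The Laplacian `Δ p = Σ_j ∂_j² p`. -/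
noncomputable def lap {R : Type*} [CommRing R] {N : ℕ}
    (p : MvPolynomial (Fin N) R) : MvPolynomial (Fin N) R :=
  ∑ j, pderiv j (pderiv j p)

/-- The polynomial `X·X = X_1² + ⋯ + X_N²`. -/
noncomputable def XX (R : Type*) [CommRing R] (N : ℕ) : MvPolynomial (Fin N) R :=
  ∑ j, X j ^ 2

/-!
Expand `Δ((X·X - c) q) = 0` and take the component of degree `m = deg q`: since `Δ` lowers
degrees by two, only `Δ(X·X Q) = 0` survives, where `Q` is the top form of `q`; by Euler's
identity this reads `(2N + 4m) Q + X·X ΔQ = 0`. Applying `Δ` to a relation `b F + X·X ΔF = 0`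
with `F` homogeneous of degree `d` and `b > 0` gives the relation
`(b + 2N + 4(d - 2)) ΔF + X·X Δ(ΔF) = 0` of the same shape in degree `d - 2`, so by induction
`ΔF = 0`, hence `b F = 0` and `F = 0` because `b` is not a zero divisor.
-/

namespace MvPolynomial

section CommSemiring

variable {σ R : Type*} [CommSemiring R]

theorem homogeneousComponent_pderiv (n : ℕ) (i : σ) (φ : MvPolynomial σ R) :
    homogeneousComponent n (pderiv i φ) = pderiv i (homogeneousComponent (n + 1) φ) := by
  ext d
  simp only [coeff_homogeneousComponent, coeff_pderiv, map_add, Finsupp.degree_single,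
    add_left_inj]
  split_ifs <;> simp

theorem homogeneousComponent_mul_of_isHomogeneous {g : MvPolynomial σ R} {k : ℕ}
    (hg : g.IsHomogeneous k) (n : ℕ) (f : MvPolynomial σ R) :
    homogeneousComponent (n + k) (g * f) = g * homogeneousComponent n f := by
  induction f using MvPolynomial.induction_on' with
  | monomial s a =>
    have hs : (monomial s a).IsHomogeneous s.degree := isHomogeneous_monomial a rfl
    rw [homogeneousComponent_of_mem (hg.mul hs), homogeneousComponent_of_mem hs]
    by_cases h : s.degree = n
    · simp [h, add_comm]
    · rw [if_neg (by omega), if_neg (Ne.symm h), mul_zero]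
  | add p q hp hq => rw [mul_add, map_add, hp, hq, map_add, mul_add]

theorem homogeneousComponent_totalDegree_ne_zero {φ : MvPolynomial σ R} (hφ : φ ≠ 0) :
    homogeneousComponent φ.totalDegree φ ≠ 0 := by
  obtain ⟨d, hd, hdeg⟩ := Finset.exists_mem_eq_sup φ.support
    (support_nonempty.mpr hφ) fun s => s.sum fun _ e => e
  refine ne_zero_iff.mpr ⟨d, ?_⟩
  rwa [coeff_homogeneousComponent, if_pos (by rw [totalDegree, hdeg]; rfl), ← mem_support_iff]

end CommSemiring

theorem eq_zero_of_nsmul_eq_zero {σ R : Type*} [CommRing R] {b : ℕ}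
    (hb : (b : R) ∈ nonZeroDivisors R) {φ : MvPolynomial σ R} (h : b • φ = 0) : φ = 0 := by
  ext d
  have hd := congr(coeff d $h)
  rw [coeff_smul, coeff_zero, nsmul_eq_mul] at hd
  exact (mul_left_mem_nonZeroDivisors_eq_zero_iff hb).mp hd

end MvPolynomial

section Laplacian

variable {R : Type*} [CommRing R] {N : ℕ}

theorem lap_add (f g : MvPolynomial (Fin N) R) : lap (f + g) = lap f + lap g := by
  simp only [lap, map_add, Finset.sum_add_distrib]

theorem lap_nsmul (b : ℕ) (f : MvPolynomial (Fin N) R) : lap (b • f) = b • lap f := by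
  simp only [lap, map_nsmul, Finset.smul_sum]

@[simp]
theorem lap_zero : lap (0 : MvPolynomial (Fin N) R) = 0 := by
  simp [lap]

@[simp]
theorem lap_C (a : R) : lap (C a : MvPolynomial (Fin N) R) = 0 := by
  simp [lap]

theorem homogeneousComponent_lap (n : ℕ) (f : MvPolynomial (Fin N) R) :
    homogeneousComponent n (lap f) = lap (homogeneousComponent (n + 2) f) := by
  simp only [lap, map_sum, homogeneousComponent_pderiv]

theorem MvPolynomial.IsHomogeneous.lap {f : MvPolynomial (Fin N) R} {n : ℕ}
    (hf : f.IsHomogeneous n) : (lap f).IsHomogeneous (n - 2) :=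
  IsHomogeneous.sum _ _ _ fun _ _ => by simpa [Nat.sub_sub] using hf.pderiv.pderiv

theorem isHomogeneous_XX : (XX R N).IsHomogeneous 2 :=
  IsHomogeneous.sum _ _ _ fun j _ => isHomogeneous_X_pow j 2

theorem pderiv_XX (j : Fin N) : pderiv j (XX R N) = 2 * X j := by
  simp [XX, pderiv_X, Pi.single_apply]

theorem lap_XX_mul (g : MvPolynomial (Fin N) R) :
    lap (XX R N * g) = (2 * N) • g + 4 • ∑ j, X j * pderiv j g + XX R N * lap g := by
  have hj (j : Fin N) : pderiv j (pderiv j (XX R N * g)) =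
      2 * g + 4 * (X j * pderiv j g) + XX R N * pderiv j (pderiv j g) := by
    have h2 : pderiv j (2 : MvPolynomial (Fin N) R) = 0 := mod_cast (pderiv j).map_natCast 2
    simp only [pderiv_mul, pderiv_XX, pderiv_X_self, map_add, h2]
    ring
  simp only [lap, hj, Finset.sum_add_distrib, Finset.sum_const, Finset.card_univ,
    Fintype.card_fin, ← Finset.mul_sum]
  simp only [nsmul_eq_mul]
  push_cast
  ring

theorem lap_XX_mul_of_isHomogeneous {g : MvPolynomial (Fin N) R} {d : ℕ}
    (hg : g.IsHomogeneous d) :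
    lap (XX R N * g) = (2 * N + 4 * d) • g + XX R N * lap g := by
  rw [lap_XX_mul, hg.sum_X_mul_pderiv, smul_smul, ← add_smul]

theorem eq_zero_of_nsmul_add_XX_mul_lap_eq_zero
    (hR : ∀ n : ℕ, 0 < n → (n : R) ∈ nonZeroDivisors R) {d : ℕ}
    {f : MvPolynomial (Fin N) R} (hf : f.IsHomogeneous d) {b : ℕ} (hb : 0 < b)
    (h : b • f + XX R N * lap f = 0) : f = 0 := by
  induction d using Nat.strong_induction_on generalizing f b with
  | _ d ih =>
  have hlap : lap f = 0 := by
    rcases Nat.eq_zero_or_pos d with rfl | hd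
    · rw [totalDegree_eq_zero_iff_eq_C.mp ((totalDegree_zero_iff_isHomogeneous _).mpr hf), lap_C]
    · refine ih (d - 2) (by omega) hf.lap (b := b + 2 * N + 4 * (d - 2)) (by omega) ?_
      have := congr(lap $h)
      rwa [lap_add, lap_nsmul, lap_XX_mul_of_isHomogeneous hf.lap, lap_zero, ← add_assoc,
        ← add_smul, ← add_assoc] at this
  rw [hlap, mul_zero, add_zero] at h
  exact eq_zero_of_nsmul_eq_zero (hR b hb) h

end Laplacian

/-- if positive integer multiples of `1_R` are not zero divisors, the only
harmonic multiple of `X·X − c` is `0`. -/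
theorem stmt5 {R : Type*} [CommRing R] {N : ℕ} (hN : 2 ≤ N)
    (hR : ∀ n : ℕ, 0 < n → (n : R) ∈ nonZeroDivisors R)
    (c : R) (p : MvPolynomial (Fin N) R) (hharm : lap p = 0)
    (hdvd : ∃ q : MvPolynomial (Fin N) R, p = (XX R N - C c) * q) :
    p = 0 := by
  obtain ⟨q, rfl⟩ := hdvd
  suffices hq : q = 0 by rw [hq, mul_zero]
  by_contra hq0
  set m := q.totalDegree
  set Q := homogeneousComponent m q
  have hQ : Q.IsHomogeneous m := homogeneousComponent_isHomogeneous m q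
  have htop : lap (XX R N * Q) = 0 := by
    have := congr(homogeneousComponent m $hharm)
    rwa [homogeneousComponent_lap, sub_mul, map_sub, homogeneousComponent_C_mul,
      homogeneousComponent_eq_zero (m + 2) q (by omega), mul_zero, sub_zero,
      homogeneousComponent_mul_of_isHomogeneous isHomogeneous_XX, map_zero] at this
  rw [lap_XX_mul_of_isHomogeneous hQ] at htop
  exact homogeneousComponent_totalDegree_ne_zero hq0
    (eq_zero_of_nsmul_add_XX_mul_lap_eq_zero hR hQ (by omega) htop)
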